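/- arXiv:0909.1852 — 6 statements merged into one kernel-verified Lean document; each statement's English description precedes it below -/
import Mathlib

section
/- (Proposition 1) For every positive integer m and every two complex numbers α ≠ 0 and x, ∑_{k=1}^m k^α x^k = ∑_{j=1}^m j! · S(α, j) · σ(x, m, j), where σ(x, m, j) = ∑_{k=j}^m C(k, j) x^k. -/
/-!
Inverting the defining formula of `S(α, j)` (binomial inversion) gives
`k ^ α = ∑_{j=1}^k C(k, j) j! S(α, j)` for every `k ≥ 1`. Substituting this into
`∑_{k=1}^m k ^ α x ^ k` and exchanging the order of summation over `1 ≤ j ≤ k ≤ m`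
yields the right-hand side.
-/

open Finset

/-- Stirling function of the second kind with complex argument `α`:
`S(α, k) = (1/k!) ∑_{j=1}^k (-1)^{k-j} C(k, j) j^α`. -/
noncomputable def stirlingS (α : ℂ) (k : ℕ) : ℂ :=
  (1 / (Nat.factorial k : ℂ)) *
    ∑ j ∈ Finset.Icc 1 k, (-1 : ℂ) ^ (k - j) * (Nat.choose k j : ℂ) * (j : ℂ) ^ α

theorem Finset.sum_Icc_Icc_comm {M : Type*} [AddCommMonoid M] (a b : ℕ) (f : ℕ → ℕ → M) :
    ∑ i ∈ Icc a b, ∑ j ∈ Icc i b, f i j = ∑ j ∈ Icc a b, ∑ i ∈ Icc a j, f i j :=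
  sum_comm' fun i j => by simp only [mem_Icc]; omega

theorem Int.sum_Icc_neg_one_pow_mul_choose_mul_choose (i k : ℕ) :
    ∑ j ∈ Icc i k, ((-1) ^ (j - i) * k.choose j * j.choose i : ℤ) = if i = k then 1 else 0 := by
  rcases lt_or_ge k i with hki | hik
  · simp [Icc_eq_empty_of_lt hki, hki.ne']
  rw [← Ico_add_one_right_eq_Icc, sum_Ico_eq_sum_range, show k + 1 - i = k - i + 1 by omega]
  calc _ = ∑ t ∈ Finset.range (k - i + 1), (k.choose i : ℤ) * ((-1) ^ t * (k - i).choose t) := by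
          refine sum_congr rfl fun t _ => ?_
          have := Nat.choose_mul (n := k) (k := i + t) (s := i) (by omega)
          rw [Nat.add_sub_cancel_left] at this
          rw [Nat.add_sub_cancel_left, mul_assoc, ← Nat.cast_mul, this]
          push_cast
          ring
    _ = _ := by
          rw [← mul_sum, Int.alternating_sum_range_choose]
          by_cases h : i = k <;> simp [h]
          omega

theorem sum_Icc_choose_mul_sum_Icc_neg_one_pow_mul_choose {R : Type*} [CommRing R]
    (f : ℕ → R) {a k : ℕ} (hak : a ≤ k) :
    ∑ j ∈ Icc a k, (k.choose j : R) * ∑ i ∈ Icc a j, (-1) ^ (j - i) * (j.choose i : R) * f i =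
      f k := by
  simp_rw [mul_sum, ← sum_Icc_Icc_comm]
  calc _ = ∑ i ∈ Icc a k, (if i = k then 1 else 0) * f i := by
          refine sum_congr rfl fun i _ => ?_
          have h := congrArg (Int.cast : ℤ → R) (Int.sum_Icc_neg_one_pow_mul_choose_mul_choose i k)
          push_cast at h
          rw [← h, sum_mul]
          refine sum_congr rfl fun j _ => ?_
          ring
    _ = f k := by simp [hak]

theorem factorial_mul_stirlingS (α : ℂ) (j : ℕ) :
    (j.factorial : ℂ) * stirlingS α j =
      ∑ i ∈ Icc 1 j, (-1) ^ (j - i) * (j.choose i : ℂ) * (i : ℂ) ^ α := by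
  rw [stirlingS, ← mul_assoc, mul_one_div_cancel (by exact_mod_cast j.factorial_ne_zero), one_mul]

theorem sum_Icc_choose_mul_factorial_mul_stirlingS (α : ℂ) {k : ℕ} (hk : 1 ≤ k) :
    ∑ j ∈ Icc 1 k, (k.choose j : ℂ) * ((j.factorial : ℂ) * stirlingS α j) = (k : ℂ) ^ α := by
  simp_rw [factorial_mul_stirlingS]
  exact sum_Icc_choose_mul_sum_Icc_neg_one_pow_mul_choose (fun i => (i : ℂ) ^ α) hk

theorem stmt2_general (m : ℕ) (α x : ℂ) :
    ∑ k ∈ Icc 1 m, (k : ℂ) ^ α * x ^ k =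
      ∑ j ∈ Icc 1 m, (Nat.factorial j : ℂ) * stirlingS α j *
        ∑ k ∈ Icc j m, (Nat.choose k j : ℂ) * x ^ k := by
  simp_rw [mul_sum, sum_Icc_Icc_comm]
  refine sum_congr rfl fun k hk => ?_
  rw [← sum_Icc_choose_mul_factorial_mul_stirlingS α (mem_Icc.mp hk).1, sum_mul]
  exact sum_congr rfl fun j _ => by ring

theorem stmt2 (m : ℕ) (hm : 0 < m) (α x : ℂ) (hα : α ≠ 0) :
    ∑ k ∈ Icc 1 m, (k : ℂ) ^ α * x ^ k =
      ∑ j ∈ Icc 1 m, (Nat.factorial j : ℂ) * stirlingS α j *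
        ∑ k ∈ Icc j m, (Nat.choose k j : ℂ) * x ^ k :=
  stmt2_general m α x
end

section
/- (Proposition 1, case x = 1) For every positive integer m and every complex number α ≠ 0, ∑_{k=1}^m k^α = ∑_{j=1}^m C(m+1, j+1) · j! · S(α, j). -/
/-!
With `f k = k ^ α`, the number `j! S(α, j)` is the `j`-th forward difference `Δ^j f (0)`,
and `f 0 = 0` because `α ≠ 0`. The partial sums `F n = ∑_{k < n} f k` satisfy `Δ F = f`
and `F 0 = 0`, so the Gregory–Newton formula `F (m + 1) = ∑_j C(m + 1, j) Δ^j F (0)`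
is exactly the identity.
-/

open Finset

open fwdDiff

lemma Finset.sum_Icc_one_eq_sum_range {M : Type*} [AddCommMonoid M] {g : ℕ → M} (hg : g 0 = 0)
    (m : ℕ) : ∑ k ∈ Icc 1 m, g k = ∑ k ∈ range (m + 1), g k := by
  refine sum_subset (fun k hk ↦ ?_) (fun k _ hk ↦ ?_)
  · simp only [mem_Icc] at hk
    simp only [mem_range]
    omega
  · obtain rfl : k = 0 := by simp only [mem_range, mem_Icc] at *; omega
    exact hg

lemma fwdDiff_sum_range {G : Type*} [AddCommGroup G] (f : ℕ → G) :
    Δ_[1] (fun n ↦ ∑ k ∈ range n, f k) = f :=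
  funext fun _ ↦ sum_range_succ_sub_sum f

lemma sum_range_eq_sum_choose_smul_fwdDiff_iter {G : Type*} [AddCommGroup G] (f : ℕ → G)
    (m : ℕ) :
    ∑ k ∈ range (m + 1), f k =
      ∑ j ∈ range (m + 1), (m + 1).choose (j + 1) • (Δ_[1])^[j] f 0 := by
  have := shift_eq_sum_fwdDiff_iter 1 (fun n ↦ ∑ k ∈ range n, f k) (m + 1) 0
  simp only [sum_range_succ' _ (m + 1), Function.iterate_succ_apply, fwdDiff_sum_range] at this
  simpa using this

lemma factorial_mul_stirlingS_s3 {α : ℂ} (hα : α ≠ 0) (j : ℕ) :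
    (j.factorial : ℂ) * stirlingS α j = (Δ_[1])^[j] (fun k : ℕ ↦ (k : ℂ) ^ α) 0 := by
  have hj : (j.factorial : ℂ) ≠ 0 := Nat.cast_ne_zero.2 j.factorial_ne_zero
  rw [stirlingS, ← mul_assoc, mul_one_div_cancel hj, one_mul, fwdDiff_iter_eq_sum_shift,
    sum_Icc_one_eq_sum_range (by simp [Complex.zero_cpow hα])]
  refine sum_congr rfl fun k _ ↦ ?_
  simp [zsmul_eq_mul]

theorem stmt3_general (m : ℕ) (α : ℂ) (hα : α ≠ 0) :
    ∑ k ∈ Icc 1 m, (k : ℂ) ^ α =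
      ∑ j ∈ Icc 1 m, (Nat.choose (m + 1) (j + 1) : ℂ) * (Nat.factorial j : ℂ) *
        stirlingS α j := by
  simp_rw [mul_assoc, factorial_mul_stirlingS_s3 hα]
  rw [sum_Icc_one_eq_sum_range (g := fun k : ℕ ↦ (k : ℂ) ^ α) (by simp [hα]),
    sum_Icc_one_eq_sum_range (by simp [hα]), sum_range_eq_sum_choose_smul_fwdDiff_iter]
  simp_rw [nsmul_eq_mul]

theorem stmt3 (m : ℕ) (hm : 0 < m) (α : ℂ) (hα : α ≠ 0) :
    ∑ k ∈ Icc 1 m, (k : ℂ) ^ α =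
      ∑ j ∈ Icc 1 m, (Nat.choose (m + 1) (j + 1) : ℂ) * (Nat.factorial j : ℂ) *
        stirlingS α j :=
  stmt3_general m α hα
end

section
/- For every positive integer m and every complex number α ≠ 0, ∑_{k=1}^m k^α = ∑_{j=1}^m C(m, j) · (j-1)! · S(α+1, j). -/
/-!
Put `g i = i * i ^ α`, so that `g 0 = 0` (unlike `0 ^ (α + 1)`, which is `1` for `α = -1`) and
`g k = k ^ (α + 1)` for `k ≥ 1`. Then `j! S(α + 1, j)` is the `j`-th forward difference of `g`
at `0`, and Newton's formula gives `g k = ∑_j C(k, j) Δʲ g 0`. Dividing by `k` and summing over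
`1 ≤ k ≤ m` leaves the coefficients `∑_k C(k, j) / k = C(m, j) / j`, an absorbed form of the
hockey-stick identity, and `C(m, j) / j = C(m, j) (j - 1)! / j!`.
-/

open Finset

open fwdDiff

theorem fwdDiff_iter_eq_sum_Icc_of_map_zero {G : Type*} [AddCommGroup G] {f : ℕ → G}
    (hf : f 0 = 0) (n : ℕ) :
    Δ_[1] ^[n] f 0 = ∑ k ∈ Icc 1 n, ((-1 : ℤ) ^ (n - k) * n.choose k) • f k := by
  rw [fwdDiff_iter_eq_sum_shift, range_eq_Ico, sum_eq_sum_Ico_succ_bot n.succ_pos]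
  simp [hf, Ico_add_one_right_eq_Icc]

section

variable {K : Type*} [Field K] [CharZero K]

theorem sum_Icc_choose_div_natCast (m : ℕ) {j : ℕ} (hj : 0 < j) :
    ∑ k ∈ Icc 1 m, (k.choose j : K) / k = m.choose j / j := by
  obtain ⟨i, rfl⟩ : ∃ i, j = i + 1 := ⟨j - 1, by omega⟩
  induction m with
  | zero => simp
  | succ m ih =>
    rw [sum_Icc_succ_top (by omega), ih]
    have pascal : ((m + 1).choose (i + 1) : K) = m.choose i + m.choose (i + 1) := by
      exact_mod_cast Nat.choose_succ_succ m i
    have absorb : ((m + 1 : ℕ) : K) * m.choose i = (m + 1).choose (i + 1) * (i + 1 : ℕ) := by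
      exact_mod_cast Nat.add_one_mul_choose_eq m i
    field_simp
    push_cast at absorb ⊢
    linear_combination (-(m + 1 : K)) * pascal - absorb

theorem natCast_mul_eq_sum_Icc_choose_mul_fwdDiff_iter (f : ℕ → K) {k m : ℕ} (hkm : k ≤ m) :
    (k : K) * f k = ∑ j ∈ Icc 1 m, (k.choose j : K) * Δ_[1] ^[j] (fun i : ℕ ↦ (i : K) * f i) 0 := by
  have newton := shift_eq_sum_fwdDiff_iter 1 (fun i : ℕ ↦ (i : K) * f i) k 0
  simp only [zero_add, smul_eq_mul, mul_one, nsmul_eq_mul] at newton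
  rw [newton]
  trans ∑ j ∈ range (m + 1), (k.choose j : K) * Δ_[1] ^[j] (fun i : ℕ ↦ (i : K) * f i) 0
  · refine sum_subset (range_subset_range.mpr (by omega)) fun j _ hj ↦ ?_
    rw [Nat.choose_eq_zero_of_lt (by simpa using hj), Nat.cast_zero, zero_mul]
  · refine (sum_subset (fun j hj ↦ by grind) fun j _ hj ↦ ?_).symm
    obtain rfl : j = 0 := by grind
    -- the `j = 0` term is `Δ⁰ g 0 = 0 * f 0`
    simp

theorem sum_Icc_eq_sum_choose_div_mul_fwdDiff_iter (f : ℕ → K) (m : ℕ) :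
    ∑ k ∈ Icc 1 m, f k =
      ∑ j ∈ Icc 1 m, (m.choose j : K) / j * Δ_[1] ^[j] (fun i : ℕ ↦ (i : K) * f i) 0 := by
  calc ∑ k ∈ Icc 1 m, f k
      = ∑ k ∈ Icc 1 m, ((k : K) * f k) / k :=
        sum_congr rfl fun k hk ↦ by
          rw [mul_div_cancel_left₀ _ (Nat.cast_ne_zero.mpr (by grind))]
    _ = ∑ k ∈ Icc 1 m, ∑ j ∈ Icc 1 m,
          (k.choose j : K) / k * Δ_[1] ^[j] (fun i : ℕ ↦ (i : K) * f i) 0 :=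
        sum_congr rfl fun k hk ↦ by
          rw [natCast_mul_eq_sum_Icc_choose_mul_fwdDiff_iter f (mem_Icc.mp hk).2, sum_div]
          exact sum_congr rfl fun j _ ↦ by ring
    _ = _ := by
        rw [sum_comm]
        exact sum_congr rfl fun j hj ↦ by
          rw [← sum_mul, sum_Icc_choose_div_natCast m (mem_Icc.mp hj).1]

end

theorem factorial_mul_stirlingS_add_one (α : ℂ) (j : ℕ) :
    (j.factorial : ℂ) * stirlingS (α + 1) j = Δ_[1] ^[j] (fun i : ℕ ↦ (i : ℂ) * (i : ℂ) ^ α) 0 := by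
  rw [fwdDiff_iter_eq_sum_Icc_of_map_zero (by simp), stirlingS, ← mul_assoc,
    mul_one_div_cancel (Nat.cast_ne_zero.mpr j.factorial_ne_zero), one_mul]
  refine sum_congr rfl fun i hi ↦ ?_
  rw [Complex.cpow_add _ _ (Nat.cast_ne_zero.mpr (by grind)), Complex.cpow_one, zsmul_eq_mul]
  push_cast
  ring

theorem stmt4_general (m : ℕ) (α : ℂ) :
    ∑ k ∈ Icc 1 m, (k : ℂ) ^ α =
      ∑ j ∈ Icc 1 m, (Nat.choose m j : ℂ) * (Nat.factorial (j - 1) : ℂ) *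
        stirlingS (α + 1) j := by
  rw [sum_Icc_eq_sum_choose_div_mul_fwdDiff_iter]
  refine sum_congr rfl fun j hj ↦ ?_
  obtain ⟨i, rfl⟩ : ∃ i, j = i + 1 := ⟨j - 1, by grind⟩
  rw [← factorial_mul_stirlingS_add_one, Nat.add_sub_cancel, Nat.factorial_succ]
  push_cast
  field_simp

theorem stmt4 (m : ℕ) (hm : 0 < m) (α : ℂ) (hα : α ≠ 0) :
    ∑ k ∈ Icc 1 m, (k : ℂ) ^ α =
      ∑ j ∈ Icc 1 m, (Nat.choose m j : ℂ) * (Nat.factorial (j - 1) : ℂ) *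
        stirlingS (α + 1) j :=
  stmt4_general m α
end

section
/- (Proposition 4, first identity) For every positive integer m and every complex number α ≠ 0, ∑_{k=1}^m H_k · k^α = ∑_{j=1}^m j! · S(α, j) · C(m+1, j+1) · (H_{m+1} − 1/(j+1)). -/
open Finset

/-!
For `α ≠ 0` we have `0 ^ α = 0`, so `j! S(α, j)` is the `j`-th forward difference at `0` of
`i ↦ i ^ α`, and Newton's forward-difference formula gives `k ^ α = ∑_j C(k, j) j! S(α, j)`.
Exchanging the two sums reduces the identity to
`∑_{k < n} H_k C(k, j) = C(n, j + 1) (H_n - 1/(j + 1))`, which follows by induction on `n`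
from Pascal's rule and the absorption identity `(n + 1) C(n, j) = (j + 1) C(n + 1, j + 1)`.
-/

open Nat
open scoped fwdDiff

theorem sum_Icc_one_eq_sum_range_of_map_zero {M : Type*} [AddCommMonoid M] {f : ℕ → M}
    (hf : f 0 = 0) (n : ℕ) : ∑ i ∈ Icc 1 n, f i = ∑ i ∈ range (n + 1), f i := by
  rw [range_eq_Ico, sum_eq_sum_Ico_succ_bot n.succ_pos, hf, zero_add]
  rfl

theorem eq_sum_range_choose_smul_fwdDiff_iter {G : Type*} [AddCommGroup G] (f : ℕ → G)
    {k n : ℕ} (hkn : k ≤ n) : f k = ∑ j ∈ range (n + 1), k.choose j • (Δ_[1])^[j] f 0 := by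
  have newton := shift_eq_sum_fwdDiff_iter 1 f k 0
  rw [zero_add, smul_eq_mul, mul_one] at newton
  rw [newton]
  refine sum_subset (range_subset_range.2 (by omega)) fun j _ hj ↦ ?_
  rw [Nat.choose_eq_zero_of_lt (by simpa using hj), zero_smul]

theorem factorial_mul_stirlingS_eq_fwdDiff_iter {α : ℂ} (hα : α ≠ 0) (j : ℕ) :
    (j ! : ℂ) * stirlingS α j = (Δ_[1])^[j] (fun i : ℕ ↦ (i : ℂ) ^ α) 0 := by
  rw [fwdDiff_iter_eq_sum_shift, ← sum_Icc_one_eq_sum_range_of_map_zero (by simp [hα]),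
    stirlingS, ← mul_assoc, mul_one_div_cancel (mod_cast j.factorial_ne_zero), one_mul]
  refine sum_congr rfl fun i _ ↦ ?_
  simp

theorem natCast_cpow_eq_sum_choose_mul_stirlingS {α : ℂ} (hα : α ≠ 0) {k n : ℕ} (hkn : k ≤ n) :
    (k : ℂ) ^ α = ∑ j ∈ range (n + 1), k.choose j * ((j ! : ℂ) * stirlingS α j) := by
  simp only [factorial_mul_stirlingS_eq_fwdDiff_iter hα, ← nsmul_eq_mul]
  exact eq_sum_range_choose_smul_fwdDiff_iter (fun i : ℕ ↦ (i : ℂ) ^ α) hkn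

theorem sum_range_harmonic_mul_choose (j n : ℕ) :
    ∑ k ∈ range n, harmonic k * k.choose j = n.choose (j + 1) * (harmonic n - 1 / (j + 1)) := by
  induction n with
  | zero => simp
  | succ n ih =>
    have absorb : ((n + 1 : ℕ) : ℚ) * n.choose j = (n + 1).choose (j + 1) * (j + 1 : ℕ) := by
      exact_mod_cast Nat.add_one_mul_choose_eq n j
    rw [sum_range_succ, ih, harmonic_succ, Nat.choose_succ_succ', Nat.cast_add]
    rw [Nat.choose_succ_succ', Nat.cast_add] at absorb
    field_simp
    push_cast at *
    linear_combination absorb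

theorem stmt11_general (m : ℕ) (α : ℂ) (hα : α ≠ 0) :
    ∑ k ∈ Icc 1 m, ((harmonic k : ℚ) : ℂ) * (k : ℂ) ^ α =
      ∑ j ∈ Icc 1 m, (Nat.factorial j : ℂ) * stirlingS α j *
        (Nat.choose (m + 1) (j + 1) : ℂ) *
        (((harmonic (m + 1) : ℚ) : ℂ) - 1 / ((j : ℂ) + 1)) := by
  set c : ℕ → ℂ := fun j ↦ (j ! : ℂ) * stirlingS α j
  have harmonic_sum (j : ℕ) : ∑ k ∈ range (m + 1), ((harmonic k : ℚ) : ℂ) * k.choose j =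
      (m + 1).choose (j + 1) * (((harmonic (m + 1) : ℚ) : ℂ) - 1 / ((j : ℂ) + 1)) := by
    have h := congrArg ((↑) : ℚ → ℂ) (sum_range_harmonic_mul_choose j (m + 1))
    push_cast at h
    exact h
  calc ∑ k ∈ Icc 1 m, ((harmonic k : ℚ) : ℂ) * (k : ℂ) ^ α
      = ∑ k ∈ range (m + 1), ((harmonic k : ℚ) : ℂ) * (k : ℂ) ^ α :=
        sum_Icc_one_eq_sum_range_of_map_zero (by simp) m
    _ = ∑ k ∈ range (m + 1), ∑ j ∈ range (m + 1), ((harmonic k : ℚ) : ℂ) * (k.choose j * c j) :=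
        sum_congr rfl fun k hk ↦ by
          rw [natCast_cpow_eq_sum_choose_mul_stirlingS hα (mem_range_succ_iff.1 hk), mul_sum]
    _ = ∑ j ∈ range (m + 1), c j * ∑ k ∈ range (m + 1), ((harmonic k : ℚ) : ℂ) * k.choose j := by
        rw [sum_comm]
        exact sum_congr rfl fun j _ ↦ by rw [mul_sum]; exact sum_congr rfl fun k _ ↦ by ring
    _ = _ := by
        simp_rw [harmonic_sum, ← mul_assoc]
        exact (sum_Icc_one_eq_sum_range_of_map_zero (by simp [c, stirlingS]) m).symm

theorem stmt11 (m : ℕ) (hm : 0 < m) (α : ℂ) (hα : α ≠ 0) :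
    ∑ k ∈ Icc 1 m, ((harmonic k : ℚ) : ℂ) * (k : ℂ) ^ α =
      ∑ j ∈ Icc 1 m, (Nat.factorial j : ℂ) * stirlingS α j *
        (Nat.choose (m + 1) (j + 1) : ℂ) *
        (((harmonic (m + 1) : ℚ) : ℂ) - 1 / ((j : ℂ) + 1)) :=
  stmt11_general m α hα
end

section
/- For all integers m ≥ j ≥ 0, ∑_{k=j}^m C(k, j) · H_k = C(m+1, j+1) · (H_{m+1} − 1/(j+1)), as an identity of rational numbers. -/
open Finset

theorem sum_range_choose_mul_harmonic (n j : ℕ) :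
    ∑ k ∈ range n, (k.choose j : ℚ) * harmonic k =
      (n.choose (j + 1) : ℚ) * (harmonic n - 1 / ((j : ℚ) + 1)) := by
  induction n with
  | zero => simp
  | succ n ih =>
    have pascal : ((n + 1).choose (j + 1) : ℚ) = n.choose j + n.choose (j + 1) := by
      exact_mod_cast Nat.choose_succ_succ n j
    have absorption : ((n : ℚ) + 1) * n.choose j = (n + 1).choose (j + 1) * ((j : ℚ) + 1) := by
      exact_mod_cast Nat.add_one_mul_choose_eq n j
    rw [sum_range_succ, ih, harmonic_succ, pascal]
    rw [pascal] at absorption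
    push_cast
    field_simp
    linear_combination absorption

theorem stmt13_general (m j : ℕ) :
    ∑ k ∈ Icc j m, (Nat.choose k j : ℚ) * harmonic k =
      (Nat.choose (m + 1) (j + 1) : ℚ) * (harmonic (m + 1) - 1 / ((j : ℚ) + 1)) := by
  rw [← sum_range_choose_mul_harmonic]
  refine sum_subset (fun k hk => mem_range.2 (Nat.lt_succ_of_le (mem_Icc.1 hk).2)) ?_
  intro k hk hkj
  have hlt : k < j := by
    simp only [mem_range, mem_Icc, not_and_or, not_le] at hk hkj
    omega
  simp [Nat.choose_eq_zero_of_lt hlt]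

theorem stmt13 (m j : ℕ) (h : j ≤ m) :
    ∑ k ∈ Icc j m, (Nat.choose k j : ℚ) * harmonic k =
      (Nat.choose (m + 1) (j + 1) : ℚ) * (harmonic (m + 1) - 1 / ((j : ℚ) + 1)) :=
  stmt13_general m j
end

section
/- For all integers m ≥ j ≥ 0, ∑_{k=j}^m C(k, j) / (m − k + 1) = C(m+1, j) · (H_{m+1} − H_j), as an identity of rational numbers. -/
open Finset

/-!
Writing `n = m + 1` and extending the sum to `k < n` (the extra terms vanish), both sides
`F n j = ∑_{k<n} C(k, j) / (n - k)` and `G n j = C(n, j) (H_n - H_j)` vanish at `n = 0`, equal `H_n`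
at `j = 0`, and satisfy Pascal's recurrence `X (n+1) (j+1) = X n j + X n (j+1)`.
-/

lemma sum_range_inv_sub (n : ℕ) : ∑ k ∈ range n, ((n - k : ℕ) : ℚ)⁻¹ = harmonic n := by
  rw [harmonic, ← sum_range_reflect]
  refine sum_congr rfl fun k hk => ?_
  rw [mem_range] at hk
  congr 2
  omega

lemma choose_mul_harmonic_sub_succ (n j : ℕ) :
    ((n + 1).choose (j + 1) : ℚ) * (harmonic (n + 1) - harmonic (j + 1)) =
      (n.choose j : ℚ) * (harmonic n - harmonic j) +
        (n.choose (j + 1) : ℚ) * (harmonic n - harmonic (j + 1)) := by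
  have pascal : ((n + 1).choose (j + 1) : ℚ) = n.choose j + n.choose (j + 1) := by
    exact_mod_cast Nat.choose_succ_succ n j
  have absorb : ((n + 1).choose (j + 1) : ℚ) / (n + 1) = n.choose j / (j + 1) := by
    rw [div_eq_div_iff (by positivity) (by positivity), mul_comm (n.choose j : ℚ)]
    exact_mod_cast (Nat.add_one_mul_choose_eq n j).symm
  rw [harmonic_succ, harmonic_succ, Nat.cast_add_one, Nat.cast_add_one]
  linear_combination (harmonic n - harmonic j - ((j : ℚ) + 1)⁻¹) * pascal + absorb

lemma sum_range_choose_div_sub (n j : ℕ) :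
    ∑ k ∈ range n, (k.choose j : ℚ) / (n - k : ℕ) = n.choose j * (harmonic n - harmonic j) := by
  induction n generalizing j with
  | zero => cases j <;> simp
  | succ n ih =>
    cases j with
    | zero => simpa [one_div] using sum_range_inv_sub (n + 1)
    | succ j =>
      have pascal (k : ℕ) : ((k + 1).choose (j + 1) : ℚ) / (n + 1 - (k + 1) : ℕ) =
          (k.choose j : ℚ) / (n - k : ℕ) + (k.choose (j + 1) : ℚ) / (n - k : ℕ) := by
        rw [Nat.add_sub_add_right, Nat.choose_succ_succ, Nat.cast_add, add_div]
      rw [sum_range_succ', sum_congr rfl fun k _ => pascal k, sum_add_distrib, ih, ih,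
        choose_mul_harmonic_sub_succ]
      simp

theorem stmt14_general (m j : ℕ) :
    ∑ k ∈ Icc j m, (Nat.choose k j : ℚ) / ((m - k + 1 : ℕ) : ℚ) =
      (Nat.choose (m + 1) j : ℚ) * (harmonic (m + 1) - harmonic j) := by
  rw [← sum_range_choose_div_sub]
  have extend : ∑ k ∈ Icc j m, (k.choose j : ℚ) / (m + 1 - k : ℕ) =
      ∑ k ∈ range (m + 1), (k.choose j : ℚ) / (m + 1 - k : ℕ) := by
    refine sum_subset (fun k hk => ?_) fun k _ hk => ?_
    · simp only [mem_Icc, mem_range] at hk ⊢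
      omega
    · rw [Nat.choose_eq_zero_of_lt (by simp_all), Nat.cast_zero, zero_div]
  rw [← extend]
  exact sum_congr rfl fun k hk => by rw [Nat.sub_add_comm (mem_Icc.mp hk).2]

theorem stmt14 (m j : ℕ) (h : j ≤ m) :
    ∑ k ∈ Icc j m, (Nat.choose k j : ℚ) / ((m - k + 1 : ℕ) : ℚ) =
      (Nat.choose (m + 1) j : ℚ) * (harmonic (m + 1) - harmonic j) :=
  stmt14_general m j
end
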